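/- Let G be a K₄-free and 3-cycle-free graph containing an induced butterfly H with vertices y₁,…,y₅ (edges y₁y₂, y₂y₃, y₁y₄, y₂y₄, y₂y₅, y₃y₅, y₄y₅). If u is a vertex of G not in H that is adjacent to y₄, then the set of neighbors of u in H is one of the following three sets: {y₄}, {y₂,y₄}, {y₁,y₃,y₄}. -/

import Mathlib

open SimpleGraph

variable {V : Type*}

/-- A cycle in `G`, given as an injective map from `ZMod n` (`n ≥ 3`) sending
consecutive elements to adjacent vertices. -/
def IsCycleMap (G : SimpleGraph V) {n : ℕ} (f : ZMod n → V) : Prop :=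
  3 ≤ n ∧ Function.Injective f ∧ ∀ i, G.Adj (f i) (f (i + 1))

/-- The set of chords of the cycle given by `f`: edges of `G` joining two
non-consecutive vertices of the cycle. -/
def chordSet (G : SimpleGraph V) {n : ℕ} (f : ZMod n → V) : Set (Sym2 V) :=
  {e | ∃ i j : ZMod n, e = s(f i, f j) ∧ G.Adj (f i) (f j) ∧ j ≠ i + 1 ∧ i ≠ j + 1}

/-- `G` has a cycle with exactly `k` chords. -/
def HasCycleWithChords (G : SimpleGraph V) (k : ℕ) : Prop :=
  ∃ (n : ℕ) (f : ZMod n → V), IsCycleMap G f ∧ (chordSet G f).ncard = k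

/-- `G` has a V-cycle: a cycle with exactly two chords, sharing an endpoint. -/
def HasVCycle (G : SimpleGraph V) : Prop :=
  ∃ (n : ℕ) (f : ZMod n → V), IsCycleMap G f ∧
    ∃ x y z : V, y ≠ z ∧ chordSet G f = {s(x, y), s(x, z)}

/-- `G` has an X-cycle: a cycle with exactly two chords `a₁a₂`, `b₁b₂` with pairwise
distinct endpoints appearing in the order `a₁, b₁, a₂, b₂` along the cycle. -/
def HasXCycle (G : SimpleGraph V) : Prop :=
  ∃ (n : ℕ) (f : ZMod n → V), IsCycleMap G f ∧
    ∃ i₁ i₂ i₃ i₄ : ZMod n, i₁.val < i₂.val ∧ i₂.val < i₃.val ∧ i₃.val < i₄.val ∧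
      chordSet G f = {s(f i₁, f i₃), s(f i₂, f i₄)}

/-- The dragonfly: the graph on seven vertices `x₁, …, x₇` (here `0, …, 6`) with edges
`x₁x₂, x₂x₃, x₃x₄, x₁x₅, x₂x₅, x₂x₆, x₃x₆, x₃x₇, x₄x₇`. -/
def dragonfly : SimpleGraph (Fin 7) :=
  SimpleGraph.fromEdgeSet
    {s(0, 1), s(1, 2), s(2, 3), s(0, 4), s(1, 4), s(1, 5), s(2, 5), s(2, 6), s(3, 6)}

/-- The butterfly: the graph on five vertices `y₁, …, y₅` (here `0, …, 4`) with edges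
`y₁y₂, y₂y₃, y₁y₄, y₂y₄, y₂y₅, y₃y₅, y₄y₅`. -/
def butterfly : SimpleGraph (Fin 5) :=
  SimpleGraph.fromEdgeSet
    {s(0, 1), s(1, 2), s(0, 3), s(1, 3), s(1, 4), s(2, 4), s(3, 4)}

/-! ### Auxiliary machinery -/

/-- Butterfly edge list. -/
def btList : List (Fin 5 × Fin 5) := [(0,1),(1,2),(0,3),(1,3),(1,4),(2,4),(3,4)]

lemma bAdj : ∀ a b : Fin 5, butterfly.Adj a b ↔ ((a,b) ∈ btList ∨ (b,a) ∈ btList) := by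
  intro a b
  rw [butterfly, SimpleGraph.fromEdgeSet_adj]
  fin_cases a <;> fin_cases b <;> simp [btList, Sym2.eq_iff] <;> decide

def r6 (l : List (Fin 6 × Fin 6)) (a b : Fin 6) : Prop := (a,b) ∈ l
instance (l : List (Fin 6 × Fin 6)) : DecidableRel (r6 l) := fun _ _ => by
  unfold r6; infer_instance
/-- concrete graph on six vertices from an edge list -/
def cg (l : List (Fin 6 × Fin 6)) : SimpleGraph (Fin 6) := SimpleGraph.fromRel (r6 l)
instance (l : List (Fin 6 × Fin 6)) : DecidableRel (cg l).Adj := fun a b =>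
  decidable_of_iff _ (SimpleGraph.fromRel_adj (r6 l) a b).symm

lemma transfer3 (G : SimpleGraph V) (H : SimpleGraph (Fin 6)) (φ : Fin 6 → V)
    (hφ : Function.Injective φ) (hadj : ∀ i j, G.Adj (φ i) (φ j) ↔ H.Adj i j)
    (h : HasCycleWithChords H 3) : HasCycleWithChords G 3 := by
  obtain ⟨n, f, ⟨h3, hinj, hcyc⟩, hc⟩ := h
  refine ⟨n, φ ∘ f, ⟨h3, hφ.comp hinj, fun i => (hadj _ _).mpr (hcyc i)⟩, ?_⟩
  have himg : chordSet G (φ ∘ f) = Sym2.map φ '' chordSet H f := by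
    ext e
    constructor
    · rintro ⟨i, j, rfl, ha, hij1, hij2⟩
      exact ⟨s(f i, f j), ⟨i, j, rfl, (hadj _ _).mp ha, hij1, hij2⟩,
        Sym2.map_pair_eq φ (f i) (f j)⟩
    · rintro ⟨e', ⟨i, j, rfl, ha, hij1, hij2⟩, rfl⟩
      exact ⟨i, j, (Sym2.map_pair_eq φ (f i) (f j)).symm, (hadj _ _).mpr ha, hij1, hij2⟩
  rw [himg, Set.ncard_image_of_injective _ (Sym2.map.injective hφ), hc]

lemma concrete3 (l : List (Fin 6 × Fin 6)) {n : ℕ} (f : ZMod n → Fin 6)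
    (c : Finset (Sym2 (Fin 6)))
    (h3 : 3 ≤ n) (hi : Function.Injective f) (ha : ∀ i, (cg l).Adj (f i) (f (i+1)))
    (hset : chordSet (cg l) f = ↑c) (hcard : c.card = 3) :
    HasCycleWithChords (cg l) 3 :=
  ⟨n, f, ⟨h3, hi, ha⟩, by rw [hset, Set.ncard_coe_finset, hcard]⟩

def L1 : List (Fin 6 × Fin 6) := [(0,1),(1,2),(0,3),(1,3),(1,4),(2,4),(3,4),(5,0),(5,3)]
def L2 : List (Fin 6 × Fin 6) := [(0,1),(1,2),(0,3),(1,3),(1,4),(2,4),(3,4),(5,2),(5,3)]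
def L3 : List (Fin 6 × Fin 6) := [(0,1),(1,2),(0,3),(1,3),(1,4),(2,4),(3,4),(5,3),(5,4)]
def L4 : List (Fin 6 × Fin 6) := [(0,1),(1,2),(0,3),(1,3),(1,4),(2,4),(3,4),(5,0),(5,3),(5,4)]
def L5 : List (Fin 6 × Fin 6) := [(0,1),(1,2),(0,3),(1,3),(1,4),(2,4),(3,4),(5,2),(5,3),(5,4)]
def L6 : List (Fin 6 × Fin 6) := [(0,1),(1,2),(0,3),(1,3),(1,4),(2,4),(3,4),(5,1),(5,2),(5,3)]
def L7 : List (Fin 6 × Fin 6) := [(0,1),(1,2),(0,3),(1,3),(1,4),(2,4),(3,4),(5,0),(5,2),(5,3),(5,4)]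

abbrev cyc6 (a b c d e f' : Fin 6) : ZMod 6 → Fin 6 := fun i => [a,b,c,d,e,f'].getD i.val 0
abbrev cyc5 (a b c d e : Fin 6) : ZMod 5 → Fin 6 := fun i => [a,b,c,d,e].getD i.val 0

lemma hc1 : HasCycleWithChords (cg L1) 3 := by
  refine concrete3 L1 (cyc6 5 0 1 2 4 3) {s(1,3),s(1,4),s(0,3)} (by norm_num) (by decide)
    (by decide) ?_ (by decide)
  ext e
  simp only [chordSet, Set.mem_setOf_eq, Finset.coe_insert, Set.mem_insert_iff,
    Finset.coe_singleton, Set.mem_singleton_iff, Finset.mem_insert, Finset.mem_singleton]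
  revert e; decide

lemma hc2 : HasCycleWithChords (cg L2) 3 := by
  refine concrete3 L2 (cyc6 5 3 0 1 4 2) {s(1,2),s(1,3),s(3,4)} (by norm_num) (by decide)
    (by decide) ?_ (by decide)
  ext e
  simp only [chordSet, Set.mem_setOf_eq, Finset.coe_insert, Set.mem_insert_iff,
    Finset.coe_singleton, Set.mem_singleton_iff, Finset.mem_insert, Finset.mem_singleton]
  revert e; decide

lemma hc3 : HasCycleWithChords (cg L3) 3 := by
  refine concrete3 L3 (cyc6 5 3 0 1 2 4) {s(1,3),s(1,4),s(3,4)} (by norm_num) (by decide)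
    (by decide) ?_ (by decide)
  ext e
  simp only [chordSet, Set.mem_setOf_eq, Finset.coe_insert, Set.mem_insert_iff,
    Finset.coe_singleton, Set.mem_singleton_iff, Finset.mem_insert, Finset.mem_singleton]
  revert e; decide

lemma hc4 : HasCycleWithChords (cg L4) 3 := by
  refine concrete3 L4 (cyc5 5 0 1 4 3) {s(5,4),s(0,3),s(1,3)} (by norm_num) (by decide)
    (by decide) ?_ (by decide)
  ext e
  simp only [chordSet, Set.mem_setOf_eq, Finset.coe_insert, Set.mem_insert_iff,
    Finset.coe_singleton, Set.mem_singleton_iff, Finset.mem_insert, Finset.mem_singleton]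
  revert e; decide

lemma hc5 : HasCycleWithChords (cg L5) 3 := by
  refine concrete3 L5 (cyc5 5 2 1 3 4) {s(5,3),s(2,4),s(1,4)} (by norm_num) (by decide)
    (by decide) ?_ (by decide)
  ext e
  simp only [chordSet, Set.mem_setOf_eq, Finset.coe_insert, Set.mem_insert_iff,
    Finset.coe_singleton, Set.mem_singleton_iff, Finset.mem_insert, Finset.mem_singleton]
  revert e; decide

lemma hc6 : HasCycleWithChords (cg L6) 3 := by
  refine concrete3 L6 (cyc5 5 3 1 4 2) {s(5,1),s(1,2),s(3,4)} (by norm_num) (by decide)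
    (by decide) ?_ (by decide)
  ext e
  simp only [chordSet, Set.mem_setOf_eq, Finset.coe_insert, Set.mem_insert_iff,
    Finset.coe_singleton, Set.mem_singleton_iff, Finset.mem_insert, Finset.mem_singleton]
  revert e; decide

lemma hc7 : HasCycleWithChords (cg L7) 3 := by
  refine concrete3 L7 (cyc5 5 0 1 4 3) {s(5,4),s(0,3),s(1,3)} (by norm_num) (by decide)
    (by decide) ?_ (by decide)
  ext e
  simp only [chordSet, Set.mem_setOf_eq, Finset.coe_insert, Set.mem_insert_iff,
    Finset.coe_singleton, Set.mem_singleton_iff, Finset.mem_insert, Finset.mem_singleton]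
  revert e; decide

lemma k4false (G : SimpleGraph V) (hK4 : G.CliqueFree 4) (a b c d : V)
    (hab : G.Adj a b) (hac : G.Adj a c) (had : G.Adj a d)
    (hbc : G.Adj b c) (hbd : G.Adj b d) (hcd : G.Adj c d) : False := by
  classical
  apply hK4 {a, b, c, d}
  rw [SimpleGraph.isNClique_iff]
  constructor
  · intro x hx z hz hxz
    simp only [Finset.coe_insert, Set.mem_insert_iff, Finset.coe_singleton,
      Set.mem_singleton_iff] at hx hz
    rcases hx with rfl | rfl | rfl | rfl <;> rcases hz with rfl | rfl | rfl | rfl <;>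
      first
        | exact absurd rfl hxz
        | assumption
        | exact hab.symm | exact hac.symm | exact had.symm
        | exact hbc.symm | exact hbd.symm | exact hcd.symm
  · rw [Finset.card_insert_of_notMem (by simp [hab.ne, hac.ne, had.ne]),
      Finset.card_insert_of_notMem (by simp [hbc.ne, hbd.ne]),
      Finset.card_insert_of_notMem (by simp [hcd.ne]), Finset.card_singleton]

/-- Let `G` be `K₄`-free and 3-cycle-free, containing an induced butterfly with
vertices `y 0, …, y 4` (here `y i` is the paper's `y_{i+1}`). If `u` is a vertex not
in the butterfly adjacent to `y₄ = y 3`, then the set of neighbors of `u` in the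
butterfly is one of `{y₄}`, `{y₂, y₄}`, `{y₁, y₃, y₄}`. -/
theorem butterfly_attachment {V : Type*} [Fintype V]
    (G : SimpleGraph V) (hK4 : G.CliqueFree 4) (h3 : ¬ HasCycleWithChords G 3)
    (y : Fin 5 → V) (hinj : Function.Injective y)
    (hind : ∀ i j, G.Adj (y i) (y j) ↔ butterfly.Adj i j)
    (u : V) (hu : u ∉ Set.range y) (hadj : G.Adj u (y 3)) :
    {w ∈ Set.range y | G.Adj u w} = {y 3} ∨
    {w ∈ Set.range y | G.Adj u w} = {y 1, y 3} ∨
    {w ∈ Set.range y | G.Adj u w} = {y 0, y 2, y 3} := by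
  have hyu : ∀ i : Fin 5, y i ≠ u := fun i h => hu ⟨i, h⟩
  have hφ : Function.Injective ![y 0, y 1, y 2, y 3, y 4, u] := by
    have : ∀ i j : Fin 6, ![y 0, y 1, y 2, y 3, y 4, u] i = ![y 0, y 1, y 2, y 3, y 4, u] j →
        i = j := by
      intro i j
      fin_cases i <;> fin_cases j <;> intro h <;>
        first
          | rfl
          | exact absurd (hinj h) (by decide)
          | exact absurd h (hyu _)
          | exact absurd h.symm (hyu _)
    exact fun {i j} h => this i j h
  have key : ∀ l : List (Fin 6 × Fin 6),
      (∀ i j, G.Adj (![y 0, y 1, y 2, y 3, y 4, u] i) (![y 0, y 1, y 2, y 3, y 4, u] j) ↔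
        (cg l).Adj i j) → HasCycleWithChords (cg l) 3 → False :=
    fun l hl hc => h3 (transfer3 G (cg l) _ hφ hl hc)
  have hy33 : G.Adj (y 3) u := hadj.symm
  by_cases h1 : G.Adj u (y 1)
  · by_cases h0 : G.Adj u (y 0)
    · exact absurd (k4false G hK4 u (y 0) (y 1) (y 3) h0 h1 hadj
        ((hind 0 1).mpr (by rw [bAdj]; decide)) ((hind 0 3).mpr (by rw [bAdj]; decide))
        ((hind 1 3).mpr (by rw [bAdj]; decide))) (fun h => h)
    · by_cases h4 : G.Adj u (y 4)
      · exact absurd (k4false G hK4 u (y 1) (y 3) (y 4) h1 hadj h4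
          ((hind 1 3).mpr (by rw [bAdj]; decide)) ((hind 1 4).mpr (by rw [bAdj]; decide))
          ((hind 3 4).mpr (by rw [bAdj]; decide))) (fun h => h)
      · by_cases h2 : G.Adj u (y 2)
        · -- case 6 : N = {y1, y2, y3}
          exact absurd (key L6 (by
            intro i j
            fin_cases i <;> fin_cases j <;>
              first
                | exact iff_of_false G.irrefl (by decide)
                | exact iff_of_true ((hind _ _).mpr (by rw [bAdj]; decide)) (by decide)
                | exact iff_of_false (fun h => absurd ((hind _ _).mp h)
                    (by rw [bAdj]; decide)) (by decide)
                | exact iff_of_true hadj (by decide)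
                | exact iff_of_true hadj.symm (by decide)
                | exact iff_of_true h0 (by decide)
                | exact iff_of_true h0.symm (by decide)
                | exact iff_of_true h1 (by decide)
                | exact iff_of_true h1.symm (by decide)
                | exact iff_of_true h2 (by decide)
                | exact iff_of_true h2.symm (by decide)
                | exact iff_of_true h4 (by decide)
                | exact iff_of_true h4.symm (by decide)
                | exact iff_of_false (fun h => h0 h) (by decide)
                | exact iff_of_false (fun h => h0 h.symm) (by decide)
                | exact iff_of_false (fun h => h1 h) (by decide)
                | exact iff_of_false (fun h => h1 h.symm) (by decide)
                | exact iff_of_false (fun h => h2 h) (by decide)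
                | exact iff_of_false (fun h => h2 h.symm) (by decide)
                | exact iff_of_false (fun h => h4 h) (by decide)
                | exact iff_of_false (fun h => h4 h.symm) (by decide)) hc6) (fun h => h)
        · -- conclusion {y1, y3}
          right; left
          ext w
          simp only [Set.mem_setOf_eq, Set.mem_range, Set.mem_insert_iff,
            Set.mem_singleton_iff]
          constructor
          · rintro ⟨⟨i, rfl⟩, hw⟩
            fin_cases i
            · exact absurd hw h0
            · exact Or.inl rfl
            · exact absurd hw h2
            · exact Or.inr rfl
            · exact absurd hw h4
          · rintro (rfl | rfl)
            · exact ⟨⟨1, rfl⟩, h1⟩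
            · exact ⟨⟨3, rfl⟩, hadj⟩
  · by_cases h0 : G.Adj u (y 0) <;> by_cases h2 : G.Adj u (y 2) <;>
      by_cases h4 : G.Adj u (y 4)
    · -- (T,T,T) case 7
      exact absurd (key L7 (by
        intro i j
        fin_cases i <;> fin_cases j <;>
          first
            | exact iff_of_false G.irrefl (by decide)
            | exact iff_of_true ((hind _ _).mpr (by rw [bAdj]; decide)) (by decide)
            | exact iff_of_false (fun h => absurd ((hind _ _).mp h)
                (by rw [bAdj]; decide)) (by decide)
            | exact iff_of_true hadj (by decide)
            | exact iff_of_true hadj.symm (by decide)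
            | exact iff_of_true h0 (by decide)
            | exact iff_of_true h0.symm (by decide)
            | exact iff_of_true h2 (by decide)
            | exact iff_of_true h2.symm (by decide)
            | exact iff_of_true h4 (by decide)
            | exact iff_of_true h4.symm (by decide)
            | exact iff_of_false (fun h => h1 h) (by decide)
            | exact iff_of_false (fun h => h1 h.symm) (by decide)) hc7) (fun h => h)
    · -- (T,T,F) conclusion {y0, y2, y3}
      right; right
      ext w
      simp only [Set.mem_setOf_eq, Set.mem_range, Set.mem_insert_iff, Set.mem_singleton_iff]
      constructor
      · rintro ⟨⟨i, rfl⟩, hw⟩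
        fin_cases i
        · exact Or.inl rfl
        · exact absurd hw h1
        · exact Or.inr (Or.inl rfl)
        · exact Or.inr (Or.inr rfl)
        · exact absurd hw h4
      · rintro (rfl | rfl | rfl)
        · exact ⟨⟨0, rfl⟩, h0⟩
        · exact ⟨⟨2, rfl⟩, h2⟩
        · exact ⟨⟨3, rfl⟩, hadj⟩
    · -- (T,F,T) case 4
      exact absurd (key L4 (by
        intro i j
        fin_cases i <;> fin_cases j <;>
          first
            | exact iff_of_false G.irrefl (by decide)
            | exact iff_of_true ((hind _ _).mpr (by rw [bAdj]; decide)) (by decide)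
            | exact iff_of_false (fun h => absurd ((hind _ _).mp h)
                (by rw [bAdj]; decide)) (by decide)
            | exact iff_of_true hadj (by decide)
            | exact iff_of_true hadj.symm (by decide)
            | exact iff_of_true h0 (by decide)
            | exact iff_of_true h0.symm (by decide)
            | exact iff_of_true h4 (by decide)
            | exact iff_of_true h4.symm (by decide)
            | exact iff_of_false (fun h => h1 h) (by decide)
            | exact iff_of_false (fun h => h1 h.symm) (by decide)
            | exact iff_of_false (fun h => h2 h) (by decide)
            | exact iff_of_false (fun h => h2 h.symm) (by decide)) hc4) (fun h => h)
    · -- (T,F,F) case 1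
      exact absurd (key L1 (by
        intro i j
        fin_cases i <;> fin_cases j <;>
          first
            | exact iff_of_false G.irrefl (by decide)
            | exact iff_of_true ((hind _ _).mpr (by rw [bAdj]; decide)) (by decide)
            | exact iff_of_false (fun h => absurd ((hind _ _).mp h)
                (by rw [bAdj]; decide)) (by decide)
            | exact iff_of_true hadj (by decide)
            | exact iff_of_true hadj.symm (by decide)
            | exact iff_of_true h0 (by decide)
            | exact iff_of_true h0.symm (by decide)
            | exact iff_of_false (fun h => h1 h) (by decide)
            | exact iff_of_false (fun h => h1 h.symm) (by decide)
            | exact iff_of_false (fun h => h2 h) (by decide)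
            | exact iff_of_false (fun h => h2 h.symm) (by decide)
            | exact iff_of_false (fun h => h4 h) (by decide)
            | exact iff_of_false (fun h => h4 h.symm) (by decide)) hc1) (fun h => h)
    · -- (F,T,T) case 5
      exact absurd (key L5 (by
        intro i j
        fin_cases i <;> fin_cases j <;>
          first
            | exact iff_of_false G.irrefl (by decide)
            | exact iff_of_true ((hind _ _).mpr (by rw [bAdj]; decide)) (by decide)
            | exact iff_of_false (fun h => absurd ((hind _ _).mp h)
                (by rw [bAdj]; decide)) (by decide)
            | exact iff_of_true hadj (by decide)
            | exact iff_of_true hadj.symm (by decide)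
            | exact iff_of_true h2 (by decide)
            | exact iff_of_true h2.symm (by decide)
            | exact iff_of_true h4 (by decide)
            | exact iff_of_true h4.symm (by decide)
            | exact iff_of_false (fun h => h0 h) (by decide)
            | exact iff_of_false (fun h => h0 h.symm) (by decide)
            | exact iff_of_false (fun h => h1 h) (by decide)
            | exact iff_of_false (fun h => h1 h.symm) (by decide)) hc5) (fun h => h)
    · -- (F,T,F) case 2
      exact absurd (key L2 (by
        intro i j
        fin_cases i <;> fin_cases j <;>
          first
            | exact iff_of_false G.irrefl (by decide)
            | exact iff_of_true ((hind _ _).mpr (by rw [bAdj]; decide)) (by decide)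
            | exact iff_of_false (fun h => absurd ((hind _ _).mp h)
                (by rw [bAdj]; decide)) (by decide)
            | exact iff_of_true hadj (by decide)
            | exact iff_of_true hadj.symm (by decide)
            | exact iff_of_true h2 (by decide)
            | exact iff_of_true h2.symm (by decide)
            | exact iff_of_false (fun h => h0 h) (by decide)
            | exact iff_of_false (fun h => h0 h.symm) (by decide)
            | exact iff_of_false (fun h => h1 h) (by decide)
            | exact iff_of_false (fun h => h1 h.symm) (by decide)
            | exact iff_of_false (fun h => h4 h) (by decide)
            | exact iff_of_false (fun h => h4 h.symm) (by decide)) hc2) (fun h => h)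
    · -- (F,F,T) case 3
      exact absurd (key L3 (by
        intro i j
        fin_cases i <;> fin_cases j <;>
          first
            | exact iff_of_false G.irrefl (by decide)
            | exact iff_of_true ((hind _ _).mpr (by rw [bAdj]; decide)) (by decide)
            | exact iff_of_false (fun h => absurd ((hind _ _).mp h)
                (by rw [bAdj]; decide)) (by decide)
            | exact iff_of_true hadj (by decide)
            | exact iff_of_true hadj.symm (by decide)
            | exact iff_of_true h4 (by decide)
            | exact iff_of_true h4.symm (by decide)
            | exact iff_of_false (fun h => h0 h) (by decide)
            | exact iff_of_false (fun h => h0 h.symm) (by decide)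
            | exact iff_of_false (fun h => h1 h) (by decide)
            | exact iff_of_false (fun h => h1 h.symm) (by decide)
            | exact iff_of_false (fun h => h2 h) (by decide)
            | exact iff_of_false (fun h => h2 h.symm) (by decide)) hc3) (fun h => h)
    · -- (F,F,F) conclusion {y3}
      left
      ext w
      simp only [Set.mem_setOf_eq, Set.mem_range, Set.mem_singleton_iff]
      constructor
      · rintro ⟨⟨i, rfl⟩, hw⟩
        fin_cases i
        · exact absurd hw h0
        · exact absurd hw h1
        · exact absurd hw h2
        · rfl
        · exact absurd hw h4
      · rintro rfl
        exact ⟨⟨3, rfl⟩, hadj⟩
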